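/- Let F be an upset of a De Morgan lattice L and define the relation Ω on L by: a Ω b if and only if for all c, d ∈ L, ((a ⊓ c) ⊔ d ∈ F ↔ (b ⊓ c) ⊔ d ∈ F) and ((¬a ⊓ c) ⊔ d ∈ F ↔ (¬b ⊓ c) ⊔ d ∈ F). Then Ω is a congruence on L that is compatible with F (a ∈ F and a Ω b imply b ∈ F), and every congruence on L compatible with F is contained in Ω. (That is, Ω is the Leibniz congruence of the matrix (L, F).) -/

import Mathlib

/-- A De Morgan lattice: a distributive lattice with an antitone involution. -/
class DeMorgan (L : Type*) extends DistribLattice L where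
  dneg : L → L
  dneg_dneg : ∀ x : L, dneg (dneg x) = x
  dneg_sup : ∀ x y : L, dneg (x ⊔ y) = dneg x ⊓ dneg y

prefix:max "∼" => DeMorgan.dneg

section Defs

variable {α : Type*}

/-- An upward closed subset of a lattice. -/
def IsUpset [Lattice α] (F : Set α) : Prop :=
  ∀ ⦃x y : α⦄, x ∈ F → x ≤ y → y ∈ F

/-- A lattice filter: an upset closed under binary meets. -/
def IsLatFilter [Lattice α] (F : Set α) : Prop :=
  IsUpset F ∧ ∀ x y : α, x ∈ F → y ∈ F → x ⊓ y ∈ F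

/-- An `n`-filter: an upset such that for every nonempty finite `Y`, if the meet of
every nonempty subset of `Y` of size at most `n` lies in `F`, then so does the meet of `Y`. -/
def IsNFilter [Lattice α] (n : ℕ) (F : Set α) : Prop :=
  IsUpset F ∧ ∀ (Y : Finset α) (hY : Y.Nonempty),
    (∀ (X : Finset α) (hX : X.Nonempty), X ⊆ Y → X.card ≤ n → X.inf' hX id ∈ F) →
    Y.inf' hY id ∈ F

/-- A prime upset: `x ⊔ y ∈ F` implies `x ∈ F` or `y ∈ F`. -/
def IsPrimeUpset [Lattice α] (F : Set α) : Prop :=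
  ∀ x y : α, x ⊔ y ∈ F → x ∈ F ∨ y ∈ F

/-- A downward closed subset of a lattice. -/
def IsDownset [Lattice α] (I : Set α) : Prop :=
  ∀ ⦃x y : α⦄, x ∈ I → y ≤ x → y ∈ I

/-- A lattice ideal: a downset closed under binary joins. -/
def IsIdeal [Lattice α] (I : Set α) : Prop :=
  IsDownset I ∧ ∀ x y : α, x ∈ I → y ∈ I → x ⊔ y ∈ I

/-- An `n`-ideal: the order dual notion of an `n`-filter. -/
def IsNIdeal [Lattice α] (n : ℕ) (I : Set α) : Prop :=
  IsDownset I ∧ ∀ (Y : Finset α) (hY : Y.Nonempty),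
    (∀ (X : Finset α) (hX : X.Nonempty), X ⊆ Y → X.card ≤ n → X.sup' hX id ∈ I) →
    Y.sup' hY id ∈ I

variable {L : Type*} [DeMorgan L]

/-- Almost complete upset: `x ∈ F` implies `x ⊓ (y ⊔ ∼y) ∈ F`. -/
def AlmostComplete (F : Set L) : Prop := ∀ x ∈ F, ∀ y : L, x ⊓ (y ⊔ ∼y) ∈ F

/-- Complete upset: almost complete and nonempty. -/
def IsCompleteUpset (F : Set L) : Prop := AlmostComplete F ∧ F.Nonempty

/-- Almost consistent upset: `(x ⊓ ∼x) ⊔ y ∈ F` implies `y ∈ F`. -/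
def AlmostConsistent (F : Set L) : Prop := ∀ x y : L, (x ⊓ ∼x) ⊔ y ∈ F → y ∈ F

/-- Consistent upset: almost consistent and not total. -/
def IsConsistentUpset (F : Set L) : Prop := AlmostConsistent F ∧ F ≠ Set.univ

/-- Classical upset: complete and consistent. -/
def IsClassicalUpset (F : Set L) : Prop := IsCompleteUpset F ∧ IsConsistentUpset F

/-- Kalman upset. -/
def IsKalmanUpset (F : Set L) : Prop :=
  ∀ x y z u : L, ((x ⊓ ∼x) ⊓ z) ⊔ u ∈ F → ((y ⊔ ∼y) ⊓ z) ⊔ u ∈ F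

/-- A homomorphism of De Morgan lattices. -/
def IsDMHom {L M : Type*} [DeMorgan L] [DeMorgan M] (h : L → M) : Prop :=
  (∀ x y : L, h (x ⊓ y) = h x ⊓ h y) ∧ (∀ x y : L, h (x ⊔ y) = h x ⊔ h y) ∧
    ∀ x : L, h (∼x) = ∼(h x)

/-- The filter generated by all elements of the form `x ⊔ ∼x`. -/
def Fcomp (L : Type*) [DeMorgan L] : Set L :=
  {a | ∃ (s : Finset L) (hs : s.Nonempty), s.inf' hs (fun x => x ⊔ ∼x) ≤ a}

/-- The `n`-filter generated by a set. -/
def nFilterGen (n : ℕ) (U : Set L) : Set L :=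
  ⋂₀ {F : Set L | IsNFilter n F ∧ U ⊆ F}

/-- `Comp U`. -/
def CompCl (U : Set L) : Set L := {x | ∃ a ∈ U, ∃ f ∈ Fcomp L, a ⊓ f ≤ x}

/-- `Cons U`. -/
def ConsCl (U : Set L) : Set L := {x | ∃ f ∈ Fcomp L, ∼f ⊔ x ∈ U}

/-- A congruence of De Morgan lattices, as a binary relation. -/
def IsCongruence (θ : L → L → Prop) : Prop :=
  Equivalence θ ∧
  (∀ a b c d : L, θ a b → θ c d → θ (a ⊓ c) (b ⊓ d)) ∧
  (∀ a b c d : L, θ a b → θ c d → θ (a ⊔ c) (b ⊔ d)) ∧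
  ∀ a b : L, θ a b → θ (∼a) (∼b)

end Defs

/-- The four-element De Morgan lattice `DM₁` on `Bool × Bool`. -/
instance : DeMorgan (Bool × Bool) :=
  { (inferInstance : DistribLattice (Bool × Bool)) with
    dneg := fun p => (!p.2, !p.1)
    dneg_dneg := by decide
    dneg_sup := by decide }

/-- Powers of `DM₁`, with componentwise operations. -/
instance {ι : Type*} : DeMorgan (ι → Bool × Bool) :=
  { (inferInstance : DistribLattice (ι → Bool × Bool)) with
    dneg := fun f i => ∼(f i)
    dneg_dneg := fun f => funext fun i => DeMorgan.dneg_dneg (f i)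
    dneg_sup := fun f g => funext fun i => DeMorgan.dneg_sup (f i) (g i) }

/-
The relation `a ≡ b` given by `(a ⊓ c) ⊔ d ∈ F ↔ (b ⊓ c) ⊔ d ∈ F` for all `c, d` is already
compatible with `⊓` and `⊔` in any distributive lattice: each side is changed one argument at a
time, absorbing the other argument into `c` (for `⊓`) or into `d` (for `⊔`). Since `∼` swaps `⊓`
and `⊔`, requiring it of `∼a, ∼b` as well yields a congruence. Taking `c = a ⊔ b`, `d = a ⊓ b`
turns it into `a ∈ F ↔ b ∈ F`, and any congruence compatible with `F` relates
`(a ⊓ c) ⊔ d` to `(b ⊓ c) ⊔ d` whenever it relates `a` to `b`.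
-/

theorem DeMorgan.dneg_inf {L : Type*} [DeMorgan L] (x y : L) : ∼(x ⊓ y) = ∼x ⊔ ∼y := by
  rw [← DeMorgan.dneg_dneg (∼x ⊔ ∼y), DeMorgan.dneg_sup, DeMorgan.dneg_dneg, DeMorgan.dneg_dneg]

def MeetJoinIndist {α : Type*} [Lattice α] (F : Set α) (a b : α) : Prop :=
  ∀ c d : α, (a ⊓ c) ⊔ d ∈ F ↔ (b ⊓ c) ⊔ d ∈ F

namespace MeetJoinIndist

section Lattice

variable {α : Type*} [Lattice α] {F : Set α}

theorem equivalence : Equivalence (MeetJoinIndist F) where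
  refl _ _ _ := Iff.rfl
  symm h c d := (h c d).symm
  trans h₁ h₂ c d := (h₁ c d).trans (h₂ c d)

theorem inf {a b x y : α} (hab : MeetJoinIndist F a b) (hxy : MeetJoinIndist F x y) :
    MeetJoinIndist F (a ⊓ x) (b ⊓ y) := by
  intro c d
  calc (a ⊓ x ⊓ c) ⊔ d ∈ F ↔ (a ⊓ (x ⊓ c)) ⊔ d ∈ F := by rw [inf_assoc]
    _ ↔ (b ⊓ (x ⊓ c)) ⊔ d ∈ F := hab _ d
    _ ↔ (x ⊓ (b ⊓ c)) ⊔ d ∈ F := by rw [inf_left_comm]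
    _ ↔ (y ⊓ (b ⊓ c)) ⊔ d ∈ F := hxy _ d
    _ ↔ (b ⊓ y ⊓ c) ⊔ d ∈ F := by rw [inf_left_comm, inf_assoc]

theorem mem_iff {a b : α} (h : MeetJoinIndist F a b) : a ∈ F ↔ b ∈ F := by
  simpa only [inf_sup_self, sup_inf_self, inf_of_le_left (le_sup_right : b ≤ a ⊔ b),
    sup_of_le_left (inf_le_right : a ⊓ b ≤ b)] using h (a ⊔ b) (a ⊓ b)

theorem of_rel {θ : α → α → Prop} (hθ : Equivalence θ)
    (hinf : ∀ a b c d : α, θ a b → θ c d → θ (a ⊓ c) (b ⊓ d))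
    (hsup : ∀ a b c d : α, θ a b → θ c d → θ (a ⊔ c) (b ⊔ d))
    (hF : ∀ a b : α, a ∈ F → θ a b → b ∈ F) {a b : α} (hab : θ a b) :
    MeetJoinIndist F a b := by
  intro c d
  have h : θ ((a ⊓ c) ⊔ d) ((b ⊓ c) ⊔ d) :=
    hsup _ _ _ _ (hinf _ _ _ _ hab (hθ.refl c)) (hθ.refl d)
  exact ⟨fun ha => hF _ _ ha h, fun hb => hF _ _ hb (hθ.symm h)⟩

end Lattice

theorem sup {α : Type*} [DistribLattice α] {F : Set α} {a b x y : α}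
    (hab : MeetJoinIndist F a b) (hxy : MeetJoinIndist F x y) :
    MeetJoinIndist F (a ⊔ x) (b ⊔ y) := by
  intro c d
  calc ((a ⊔ x) ⊓ c) ⊔ d ∈ F ↔ (a ⊓ c) ⊔ ((x ⊓ c) ⊔ d) ∈ F := by rw [inf_sup_right, sup_assoc]
    _ ↔ (b ⊓ c) ⊔ ((x ⊓ c) ⊔ d) ∈ F := hab c _
    _ ↔ (x ⊓ c) ⊔ ((b ⊓ c) ⊔ d) ∈ F := by rw [sup_left_comm]
    _ ↔ (y ⊓ c) ⊔ ((b ⊓ c) ⊔ d) ∈ F := hxy c _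
    _ ↔ ((b ⊔ y) ⊓ c) ⊔ d ∈ F := by rw [inf_sup_right, sup_left_comm, sup_assoc]

end MeetJoinIndist

theorem isCongruence_meetJoinIndist_and_dneg {L : Type*} [DeMorgan L] (F : Set L) :
    IsCongruence fun a b : L => MeetJoinIndist F a b ∧ MeetJoinIndist F (∼a) (∼b) := by
  have hequiv := MeetJoinIndist.equivalence (F := F)
  refine ⟨⟨fun a => ⟨hequiv.refl a, hequiv.refl (∼a)⟩, fun h => ⟨hequiv.symm h.1, hequiv.symm h.2⟩,
    fun h₁ h₂ => ⟨hequiv.trans h₁.1 h₂.1, hequiv.trans h₁.2 h₂.2⟩⟩, ?_, ?_, ?_⟩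
  · rintro a b x y ⟨hab, hab'⟩ ⟨hxy, hxy'⟩
    rw [DeMorgan.dneg_inf, DeMorgan.dneg_inf]
    exact ⟨hab.inf hxy, hab'.sup hxy'⟩
  · rintro a b x y ⟨hab, hab'⟩ ⟨hxy, hxy'⟩
    rw [DeMorgan.dneg_sup, DeMorgan.dneg_sup]
    exact ⟨hab.sup hxy, hab'.inf hxy'⟩
  · rintro a b ⟨hab, hab'⟩
    rw [DeMorgan.dneg_dneg, DeMorgan.dneg_dneg]
    exact ⟨hab', hab⟩

theorem statement19_general {L : Type*} [DeMorgan L] (F : Set L)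
    (Ω : L → L → Prop)
    (hΩ : ∀ a b : L, Ω a b ↔ ∀ c d : L,
      (((a ⊓ c) ⊔ d ∈ F) ↔ ((b ⊓ c) ⊔ d ∈ F)) ∧
      (((∼a ⊓ c) ⊔ d ∈ F) ↔ ((∼b ⊓ c) ⊔ d ∈ F))) :
    IsCongruence Ω ∧
    (∀ a b : L, a ∈ F → Ω a b → b ∈ F) ∧
    (∀ θ : L → L → Prop, IsCongruence θ → (∀ a b : L, a ∈ F → θ a b → b ∈ F) →
      ∀ a b : L, θ a b → Ω a b) := by
  obtain rfl : Ω = fun a b => MeetJoinIndist F a b ∧ MeetJoinIndist F (∼a) (∼b) := by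
    funext a b
    simp only [hΩ, MeetJoinIndist, forall_and]
  refine ⟨isCongruence_meetJoinIndist_and_dneg F, fun a b ha hab => hab.1.mem_iff.1 ha, ?_⟩
  rintro θ ⟨hequiv, hinf, hsup, hdneg⟩ hθF a b hab
  exact ⟨.of_rel hequiv hinf hsup hθF hab, .of_rel hequiv hinf hsup hθF (hdneg a b hab)⟩

/-- the displayed relation is the Leibniz congruence of the matrix `(L, F)`:
the largest congruence of `L` compatible with `F`. -/
theorem statement19 {L : Type*} [DeMorgan L] [Nonempty L] (F : Set L) (hF : IsUpset F)
    (Ω : L → L → Prop)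
    (hΩ : ∀ a b : L, Ω a b ↔ ∀ c d : L,
      (((a ⊓ c) ⊔ d ∈ F) ↔ ((b ⊓ c) ⊔ d ∈ F)) ∧
      (((∼a ⊓ c) ⊔ d ∈ F) ↔ ((∼b ⊓ c) ⊔ d ∈ F))) :
    IsCongruence Ω ∧
    (∀ a b : L, a ∈ F → Ω a b → b ∈ F) ∧
    (∀ θ : L → L → Prop, IsCongruence θ → (∀ a b : L, a ∈ F → θ a b → b ∈ F) →
      ∀ a b : L, θ a b → Ω a b) :=
  statement19_general F Ω hΩ
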